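/- Let A and B be closed, densely defined linear operators in a complex Hilbert space H and assume A ⊣ B where the intertwining operator is a bounded metric operator G (i.e., G maps D(A) into D(B) and BGξ = GAξ for all ξ ∈ D(A)). Then for every η ∈ D(B*) one has Gη ∈ D(A*), A*Gη ∈ R(G), and G^{-1}A*Gη = B*η; in other words, B* is a restriction of the operator A^⋆_G := G^{-1}A*G. -/

import Mathlib

open scoped ComplexInnerProductSpace

noncomputable section

section Defs

variable {H K : Type*} [NormedAddCommGroup H] [InnerProductSpace ℂ H]
  [NormedAddCommGroup K] [InnerProductSpace ℂ K]

/-- A bounded operator `T : H → K` is an intertwining operator for the densely defined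
operators `A` (in `H`) and `B` (in `K`) if `T` maps `D(A)` into `D(B)` and
`B T ξ = T A ξ` for all `ξ ∈ D(A)`. -/
def Intertwines (T : H →L[ℂ] K) (A : H →ₗ.[ℂ] H) (B : K →ₗ.[ℂ] K) : Prop :=
  ∀ x : A.domain, ∃ hx : T (x : H) ∈ B.domain, B ⟨T (x : H), hx⟩ = T (A x)

/-- `l` belongs to the resolvent set `ρ(A)`: `A - l·I` is a bijection from `D(A)` onto `H`
with bounded inverse. -/
def InResolvent (A : H →ₗ.[ℂ] H) (l : ℂ) : Prop :=
  (Function.Injective fun x : A.domain => A x - l • (x : H)) ∧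
  (Function.Surjective fun x : A.domain => A x - l • (x : H)) ∧
  ∃ C : ℝ, ∀ x : A.domain, ‖(x : H)‖ ≤ C * ‖A x - l • (x : H)‖

/-- `l` belongs to the point spectrum `σ_p(A)`: it is an eigenvalue of `A`. -/
def InPointSpectrum (A : H →ₗ.[ℂ] H) (l : ℂ) : Prop :=
  ∃ x : A.domain, (x : H) ≠ 0 ∧ A x = l • (x : H)

/-- `l` belongs to the continuous spectrum `σ_c(A)`: `A - l·I` is injective with dense
range, but its inverse is unbounded. -/
def InContinuousSpectrum (A : H →ₗ.[ℂ] H) (l : ℂ) : Prop :=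
  (Function.Injective fun x : A.domain => A x - l • (x : H)) ∧
  DenseRange (fun x : A.domain => A x - l • (x : H)) ∧
  ¬ ∃ C : ℝ, ∀ x : A.domain, ‖(x : H)‖ ≤ C * ‖A x - l • (x : H)‖

/-- `l` belongs to the residual spectrum `σ_r(A)`: `A - l·I` is injective but its range
is not dense. -/
def InResidualSpectrum (A : H →ₗ.[ℂ] H) (l : ℂ) : Prop :=
  (Function.Injective fun x : A.domain => A x - l • (x : H)) ∧
  ¬ DenseRange (fun x : A.domain => A x - l • (x : H))

/-- The multiplicity of `l` as an eigenvalue of `A`, i.e. `dim ker (A - l·I)`. -/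
def eigMultiplicity (A : H →ₗ.[ℂ] H) (l : ℂ) : Cardinal :=
  Module.rank ℂ (LinearMap.ker (A.toFun - l • A.domain.subtype))

end Defs

theorem Intertwines.adjoint {H K : Type*} [NormedAddCommGroup H] [InnerProductSpace ℂ H]
    [CompleteSpace H] [NormedAddCommGroup K] [InnerProductSpace ℂ K] [CompleteSpace K]
    {T : H →L[ℂ] K} {A : H →ₗ.[ℂ] H} {B : K →ₗ.[ℂ] K} (hT : Intertwines T A B)
    (hA : Dense (A.domain : Set H)) (hB : Dense (B.domain : Set K)) :
    Intertwines T.adjoint B.adjoint A.adjoint := by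
  intro η
  have hformal : ∀ x : A.domain, ⟪T.adjoint (B.adjoint η), (x : H)⟫ = ⟪T.adjoint η, A x⟫ := by
    intro x
    obtain ⟨hx, hBx⟩ := hT x
    calc ⟪T.adjoint (B.adjoint η), (x : H)⟫ = ⟪B.adjoint η, T x⟫ := T.adjoint_inner_left _ _
      _ = ⟪(η : K), B ⟨T x, hx⟩⟫ := LinearPMap.adjoint_isFormalAdjoint hB η ⟨T x, hx⟩
      _ = ⟪T.adjoint η, A x⟫ := by rw [hBx, T.adjoint_inner_left]
  have hmem := LinearPMap.mem_adjoint_domain_of_exists _ ⟨_, hformal⟩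
  exact ⟨hmem, LinearPMap.adjoint_apply_eq hA ⟨_, hmem⟩ hformal⟩

theorem statement_11_general {H : Type*} [NormedAddCommGroup H] [InnerProductSpace ℂ H]
    [CompleteSpace H]
    (A B : H →ₗ.[ℂ] H)
    (hA : Dense (A.domain : Set H)) (hB : Dense (B.domain : Set H))
    (G : H →L[ℂ] H)
    (hGsa : IsSelfAdjoint G)
    (hG : Intertwines G A B) :
    ∀ η : B.adjoint.domain, ∃ h : G (η : H) ∈ A.adjoint.domain,
      A.adjoint ⟨G (η : H), h⟩ ∈ Set.range G ∧
      A.adjoint ⟨G (η : H), h⟩ = G (B.adjoint η) := by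
  intro η
  have hGadj : G.adjoint = G := ContinuousLinearMap.isSelfAdjoint_iff'.mp hGsa
  obtain ⟨hmem, heq⟩ := hGadj ▸ hG.adjoint hA hB η
  exact ⟨hmem, heq ▸ Set.mem_range_self _, heq⟩

/-- Let `A`, `B` be closed, densely defined in `H` with `A ⊣ B`, the
intertwining operator being a bounded metric operator `G`. Then for every `η ∈ D(B*)`:
`G η ∈ D(A*)`, `A* G η ∈ R(G)` and `G⁻¹ A* G η = B* η` (i.e. `A* G η = G B* η`);
in other words `B*` is a restriction of `A^⋆_G = G⁻¹ A* G`. -/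
theorem statement_11 {H : Type*} [NormedAddCommGroup H] [InnerProductSpace ℂ H]
    [CompleteSpace H]
    (A B : H →ₗ.[ℂ] H)
    (hA : Dense (A.domain : Set H)) (hB : Dense (B.domain : Set H))
    (hAc : A.IsClosed) (hBc : B.IsClosed)
    (G : H →L[ℂ] H)
    (hGsa : IsSelfAdjoint G) (hGpos : ∀ ξ : H, ξ ≠ 0 → 0 < (⟪G ξ, ξ⟫).re)
    (hGinj : Function.Injective G) (hGrg : DenseRange G)
    (hG : Intertwines G A B) :
    ∀ η : B.adjoint.domain, ∃ h : G (η : H) ∈ A.adjoint.domain,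
      A.adjoint ⟨G (η : H), h⟩ ∈ Set.range G ∧
      A.adjoint ⟨G (η : H), h⟩ = G (B.adjoint η) :=
  statement_11_general A B hA hB G hGsa hG
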